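/- arXiv:2309.06968 — 2 statements merged into one kernel-verified Lean document; each statement's English description precedes it below -/
import Mathlib

section
/- In every continuous quantale Q, if q₁ ≪ q₂ then there exists q ≪ 1 (the unit of the quantale) such that q₁ ≪ q₂ ⊗ q. -/
/-- `a` is way-below `b`: for every nonempty directed `D` with `b ≤ sSup D`,
some element of `D` dominates `a`. -/
def WayBelow {Q : Type*} [CompleteLattice Q] (a b : Q) : Prop :=
  ∀ D : Set Q, D.Nonempty → DirectedOn (· ≤ ·) D → b ≤ sSup D → ∃ d ∈ D, a ≤ d

/-- A complete lattice is continuous if every element is the join of the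
elements way-below it. -/
def ContinuousLattice (Q : Type*) [CompleteLattice Q] : Prop :=
  ∀ x : Q, x = sSup {y | WayBelow y x}

/-!
The elements `q₂ * q` with `q ≪ 1` form a directed set whose join is `q₂ * 1 = q₂`, because
multiplication preserves joins. In a continuous lattice an element way below the join of a
directed set is way below one of its members, which gives the required `q`.
-/

section WayBelow

variable {Q : Type*} [CompleteLattice Q] {a b c : Q}

theorem bot_wayBelow (b : Q) : WayBelow ⊥ b := fun _ ⟨d, hd⟩ _ _ ↦ ⟨d, hd, bot_le⟩

theorem WayBelow.mono_left (hab : a ≤ b) (hbc : WayBelow b c) : WayBelow a c :=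
  fun D hne hdir hle ↦ (hbc D hne hdir hle).imp fun _ ⟨hd, hbd⟩ ↦ ⟨hd, hab.trans hbd⟩

theorem WayBelow.mono_right (hab : WayBelow a b) (hbc : b ≤ c) : WayBelow a c :=
  fun D hne hdir hle ↦ hab D hne hdir (hbc.trans hle)

theorem WayBelow.sup_left (hac : WayBelow a c) (hbc : WayBelow b c) : WayBelow (a ⊔ b) c := by
  intro D hne hdir hle
  obtain ⟨d₁, hd₁, had₁⟩ := hac D hne hdir hle
  obtain ⟨d₂, hd₂, hbd₂⟩ := hbc D hne hdir hle
  obtain ⟨d, hd, hd₁d, hd₂d⟩ := hdir d₁ hd₁ d₂ hd₂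
  exact ⟨d, hd, sup_le (had₁.trans hd₁d) (hbd₂.trans hd₂d)⟩

theorem directedOn_wayBelow (b : Q) : DirectedOn (· ≤ ·) {a | WayBelow a b} :=
  fun x hx y hy ↦ ⟨x ⊔ y, hx.sup_left hy, le_sup_left, le_sup_right⟩

theorem ContinuousLattice.exists_wayBelow_of_wayBelow_sSup (hQ : ContinuousLattice Q)
    {S : Set Q} (hne : S.Nonempty) (hdir : DirectedOn (· ≤ ·) S) (ha : WayBelow a (sSup S)) :
    ∃ s ∈ S, WayBelow a s := by
  set D := {x | ∃ s ∈ S, WayBelow x s}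
  have hDne : D.Nonempty := ⟨⊥, hne.some, hne.some_mem, bot_wayBelow _⟩
  have hDdir : DirectedOn (· ≤ ·) D := by
    rintro x ⟨s, hs, hxs⟩ y ⟨t, ht, hyt⟩
    obtain ⟨u, hu, hsu, htu⟩ := hdir s hs t ht
    exact ⟨x ⊔ y, ⟨u, hu, (hxs.mono_right hsu).sup_left (hyt.mono_right htu)⟩,
      le_sup_left, le_sup_right⟩
  have hSD : sSup S ≤ sSup D := sSup_le fun s hs ↦ by
    rw [hQ s]
    exact sSup_le_sSup fun x hxs ↦ ⟨s, hs, hxs⟩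
  obtain ⟨d, ⟨s, hs, hds⟩, had⟩ := ha D hDne hDdir hSD
  exact ⟨s, hs, hds.mono_left had⟩

end WayBelow

theorem quantale_interpolation {Q : Type*} [CompleteLattice Q] [Monoid Q] [IsQuantale Q]
    (hcont : ContinuousLattice Q) {q₁ q₂ : Q} (h : WayBelow q₁ q₂) :
    ∃ q : Q, WayBelow q 1 ∧ WayBelow q₁ (q₂ * q) := by
  set S := (q₂ * ·) '' {q | WayBelow q 1}
  have hS : sSup S = q₂ := by
    rw [sSup_image, ← mul_sSup_distrib, ← hcont 1, mul_one]
  have hne : S.Nonempty := ⟨q₂ * ⊥, ⊥, bot_wayBelow 1, rfl⟩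
  have hdir : DirectedOn (· ≤ ·) S :=
    (directedOn_wayBelow 1).mono_comp fun _ _ hxy ↦ mul_le_mul_right hxy q₂
  obtain ⟨_, ⟨q, hq, rfl⟩, hq₁⟩ := hcont.exists_wayBelow_of_wayBelow_sSup hne hdir (hS ▸ h)
  exact ⟨q, hq, hq₁⟩
end

section
/- In a Q-metric space (X,d) with Q a continuous quantale, if y ∈ B(x₁,δ₁) ∩ B(x₂,δ₂) then there exists δ' ≪ 1 with B(y,δ') ⊆ B(x₁,δ₁) ∩ B(x₂,δ₂); hence the open balls form a base of a topology τ_d on X. -/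
/-- Open ball in a `Q`-metric space. -/
def ball {Q X : Type*} [CompleteLattice Q] (d : X → X → Q) (x : X) (δ : Q) : Set X :=
  {y | WayBelow δ (d x y)}

/-!
Around a point `y` of a ball `B(x, δ)` one interpolates `δ ≪ ε ≪ d(x, y)` and, by continuity
of `Q` and distributivity of `⊗` over joins, finds `η ≪ 1` with `ε ≤ d(x, y) ⊗ η`. The triangle
inequality then puts `B(y, η)` inside `B(x, δ)`. For two balls the join of the two radii works,
since a join of two elements way below `1` is way below `1`.
-/

namespace WayBelow

variable {Q : Type*} [CompleteLattice Q] {a b c : Q}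

theorem bot_left (b : Q) : WayBelow ⊥ b := by
  rintro D ⟨d, hd⟩ - -
  exact ⟨d, hd, bot_le⟩

theorem le (h : WayBelow a b) : a ≤ b := by
  obtain ⟨d, rfl, had⟩ := h {b} (Set.singleton_nonempty b) (directedOn_singleton b)
    (by rw [sSup_singleton])
  exact had

theorem mono_left_s7 (hab : a ≤ b) (h : WayBelow b c) : WayBelow a c := by
  intro D hne hdir hle
  obtain ⟨d, hd, hbd⟩ := h D hne hdir hle
  exact ⟨d, hd, hab.trans hbd⟩

theorem mono_right_s7 (hbc : b ≤ c) (h : WayBelow a b) : WayBelow a c :=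
  fun D hne hdir hle => h D hne hdir (hbc.trans hle)

theorem sup (ha : WayBelow a c) (hb : WayBelow b c) : WayBelow (a ⊔ b) c := by
  intro D hne hdir hle
  obtain ⟨d₁, hd₁, had₁⟩ := ha D hne hdir hle
  obtain ⟨d₂, hd₂, hbd₂⟩ := hb D hne hdir hle
  obtain ⟨e, he, hd₁e, hd₂e⟩ := hdir d₁ hd₁ d₂ hd₂
  exact ⟨e, he, sup_le (had₁.trans hd₁e) (hbd₂.trans hd₂e)⟩

/-- Interpolation: `D` below is directed, and its join is above `b` by continuity applied
twice. -/
theorem exists_between (hcont : ContinuousLattice Q) (h : WayBelow a b) :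
    ∃ c, WayBelow a c ∧ WayBelow c b := by
  set D : Set Q := {t | ∃ s, WayBelow t s ∧ WayBelow s b}
  have hne : D.Nonempty := ⟨⊥, ⊥, bot_left ⊥, bot_left b⟩
  have hdir : DirectedOn (· ≤ ·) D := by
    rintro t₁ ⟨s₁, ht₁, hs₁⟩ t₂ ⟨s₂, ht₂, hs₂⟩
    exact ⟨t₁ ⊔ t₂, ⟨s₁ ⊔ s₂, (ht₁.mono_right_s7 le_sup_left).sup (ht₂.mono_right_s7 le_sup_right),
      hs₁.sup hs₂⟩, le_sup_left, le_sup_right⟩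
  have hsup : b ≤ sSup D := by
    rw [hcont b]
    refine sSup_le fun s hs => ?_
    rw [hcont s]
    exact sSup_le fun t ht => le_sSup ⟨s, ht, hs⟩
  obtain ⟨t, ⟨s, hts, hsb⟩, hat⟩ := h D hne hdir hsup
  exact ⟨s, hts.mono_left_s7 hat, hsb⟩

theorem exists_wayBelow_one_le_mul [Monoid Q] [IsQuantale Q] (hcont : ContinuousLattice Q)
    (h : WayBelow a b) : ∃ η, WayBelow η 1 ∧ a ≤ b * η := by
  set D : Set Q := (b * ·) '' {η | WayBelow η 1}
  have hne : D.Nonempty := ⟨b * ⊥, ⊥, bot_left 1, rfl⟩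
  have hdir : DirectedOn (· ≤ ·) D := by
    rintro _ ⟨η₁, hη₁, rfl⟩ _ ⟨η₂, hη₂, rfl⟩
    exact ⟨b * (η₁ ⊔ η₂), ⟨η₁ ⊔ η₂, hη₁.sup hη₂, rfl⟩,
      mul_le_mul_right le_sup_left b, mul_le_mul_right le_sup_right b⟩
  have hsup : b ≤ sSup D := by
    rw [sSup_image, ← mul_sSup_distrib, ← hcont 1, mul_one]
  obtain ⟨_, ⟨η, hη, rfl⟩, hle⟩ := h D hne hdir hsup
  exact ⟨η, hη, hle⟩

end WayBelow

section Balls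

variable {Q X : Type*} [CompleteLattice Q]

def balls [One Q] (d : X → X → Q) : Set (Set X) :=
  {s | ∃ (x : X) (δ : Q), WayBelow δ 1 ∧ s = ball d x δ}

theorem ball_antitone (d : X → X → Q) (x : X) : Antitone (ball d x) :=
  fun _ _ hδ _ hy => WayBelow.mono_left_s7 hδ hy

theorem mem_ball_self [One Q] {d : X → X → Q} (hrefl : ∀ x, 1 ≤ d x x) (x : X) {δ : Q}
    (hδ : WayBelow δ 1) : x ∈ ball d x δ :=
  hδ.mono_right_s7 (hrefl x)

variable [Monoid Q] [IsQuantale Q] (hcont : ContinuousLattice Q) {d : X → X → Q}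
  (htri : ∀ x y z, d x y * d y z ≤ d x z)
include hcont htri

theorem exists_ball_subset_ball {x y : X} {δ : Q} (hy : y ∈ ball d x δ) :
    ∃ η, WayBelow η 1 ∧ ball d y η ⊆ ball d x δ := by
  obtain ⟨ε, hδε, hε⟩ := WayBelow.exists_between hcont hy
  obtain ⟨η, hη, hεη⟩ := WayBelow.exists_wayBelow_one_le_mul hcont hε
  refine ⟨η, hη, fun z hz => hδε.mono_right_s7 ?_⟩
  calc ε ≤ d x y * η := hεη
    _ ≤ d x y * d y z := mul_le_mul_right hz.le _
    _ ≤ d x z := htri x y z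

theorem exists_ball_subset_inter {x₁ x₂ y : X} {δ₁ δ₂ : Q}
    (hy : y ∈ ball d x₁ δ₁ ∩ ball d x₂ δ₂) :
    ∃ η, WayBelow η 1 ∧ ball d y η ⊆ ball d x₁ δ₁ ∩ ball d x₂ δ₂ := by
  obtain ⟨η₁, hη₁, hsub₁⟩ := exists_ball_subset_ball hcont htri hy.1
  obtain ⟨η₂, hη₂, hsub₂⟩ := exists_ball_subset_ball hcont htri hy.2
  exact ⟨η₁ ⊔ η₂, hη₁.sup hη₂, Set.subset_inter
    ((ball_antitone d y le_sup_left).trans hsub₁) ((ball_antitone d y le_sup_right).trans hsub₂)⟩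

theorem isTopologicalBasis_balls (hrefl : ∀ x, 1 ≤ d x x) :
    @TopologicalSpace.IsTopologicalBasis X (.generateFrom (balls d)) (balls d) := by
  let _ : TopologicalSpace X := .generateFrom (balls d)
  refine ⟨?_, ?_, rfl⟩
  · rintro _ ⟨x₁, δ₁, -, rfl⟩ _ ⟨x₂, δ₂, -, rfl⟩ y hy
    obtain ⟨η, hη, hsub⟩ := exists_ball_subset_inter hcont htri hy
    exact ⟨ball d y η, ⟨y, η, hη, rfl⟩, mem_ball_self hrefl y hη, hsub⟩
  · refine Set.eq_univ_of_forall fun x => ?_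
    exact ⟨ball d x ⊥, ⟨x, ⊥, WayBelow.bot_left 1, rfl⟩, mem_ball_self hrefl x (.bot_left 1)⟩

end Balls

theorem ball_inter_and_basis_general {Q X : Type*} [CompleteLattice Q] [Monoid Q] [IsQuantale Q]
    (hcont : ContinuousLattice Q) (d : X → X → Q)
    (hrefl : ∀ x : X, 1 ≤ d x x) (htri : ∀ x y z : X, d x y * d y z ≤ d x z)
    (x₁ x₂ y : X) (δ₁ δ₂ : Q)
    (hy : y ∈ ball d x₁ δ₁ ∩ ball d x₂ δ₂) :
    (∃ δ' : Q, WayBelow δ' 1 ∧ ball d y δ' ⊆ ball d x₁ δ₁ ∩ ball d x₂ δ₂) ∧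
    @TopologicalSpace.IsTopologicalBasis X
      (TopologicalSpace.generateFrom {s | ∃ (x : X) (δ : Q), WayBelow δ 1 ∧ s = ball d x δ})
      {s | ∃ (x : X) (δ : Q), WayBelow δ 1 ∧ s = ball d x δ} :=
  ⟨exists_ball_subset_inter hcont htri hy, isTopologicalBasis_balls hcont htri hrefl⟩

theorem ball_inter_and_basis {Q X : Type*} [CompleteLattice Q] [Monoid Q] [IsQuantale Q]
    (hcont : ContinuousLattice Q) (d : X → X → Q)
    (hrefl : ∀ x : X, 1 ≤ d x x) (htri : ∀ x y z : X, d x y * d y z ≤ d x z)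
    (x₁ x₂ y : X) (δ₁ δ₂ : Q) (h₁ : WayBelow δ₁ 1) (h₂ : WayBelow δ₂ 1)
    (hy : y ∈ ball d x₁ δ₁ ∩ ball d x₂ δ₂) :
    (∃ δ' : Q, WayBelow δ' 1 ∧ ball d y δ' ⊆ ball d x₁ δ₁ ∩ ball d x₂ δ₂) ∧
    @TopologicalSpace.IsTopologicalBasis X
      (TopologicalSpace.generateFrom {s | ∃ (x : X) (δ : Q), WayBelow δ 1 ∧ s = ball d x δ})
      {s | ∃ (x : X) (δ : Q), WayBelow δ 1 ∧ s = ball d x δ} :=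
  ball_inter_and_basis_general hcont d hrefl htri x₁ x₂ y δ₁ δ₂ hy
end
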